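/- arXiv:1010.0743 — 5 statements merged into one kernel-verified Lean document; each statement's English description precedes it below -/
import Mathlib

section
/- Let L be a random variable on a finite set 𝓛, let Z be a random variable on a finite set 𝓩 jointly distributed with L, let (𝓕, F) be a family of two-universal hash functions from 𝓛 to a finite set 𝓜 with F statistically independent of (L, Z). Then for every ρ with 0 < ρ ≤ 1, the conditional mutual information satisfies I(F(L); Z | F) ≤ (1/ρ) · |𝓜|^ρ · E[ P_{L|Z}(L|Z)^ρ ], where the expectation is over the joint distribution of (L, Z). -/
open scoped BigOperators

noncomputable section

/-- A probability mass function on a finite type. -/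
def IsPMF {α : Type} [Fintype α] (p : α → ℝ) : Prop :=
  (∀ a, 0 ≤ p a) ∧ ∑ a, p a = 1

/-- A channel, i.e. a conditional probability mass function. -/
def IsChannel {α β : Type} [Fintype α] [Fintype β] (W : α → β → ℝ) : Prop :=
  ∀ a, IsPMF (W a)

/-- Mutual information (natural base) of a joint pmf on a product of finite types,
with the usual convention that terms with zero probability vanish
(recall `Real.log 0 = 0` in Mathlib). -/
def mutualInfo {α β : Type} [Fintype α] [Fintype β] (p : α × β → ℝ) : ℝ :=
  ∑ a, ∑ b, p (a, b) *
    Real.log (p (a, b) / ((∑ b', p (a, b')) * (∑ a', p (a', b))))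

/-- Shannon entropy (natural base). -/
def entropy {α : Type} [Fintype α] (p : α → ℝ) : ℝ :=
  -∑ a, p a * Real.log (p a)

/-- Conditional entropy H(A|B) (natural base) of a joint pmf on `α × β`. -/
def condEntropy {α β : Type} [Fintype α] [Fintype β] (p : α × β → ℝ) : ℝ :=
  -∑ a, ∑ b, p (a, b) * Real.log (p (a, b) / ∑ a', p (a', b))

/-- Conditional mutual information I(B;C|A) (natural base) of a joint pmf on `α × β × γ`. -/
def condMutualInfo {α β γ : Type} [Fintype α] [Fintype β] [Fintype γ]
    (p : α × β × γ → ℝ) : ℝ :=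
  ∑ a, ∑ b, ∑ c, p (a, b, c) *
    Real.log (p (a, b, c) * (∑ b', ∑ c', p (a, b', c')) /
      ((∑ c', p (a, b, c')) * (∑ b', p (a, b', c))))

/-- `(μ, hash)` is a family of two-universal hash functions from `L` to `M`:
the random choice of the function is given by the pmf `μ` on the index set `ι`,
and for any two distinct inputs the collision probability is at most `1 / |M|`. -/
def TwoUniversal {ι L M : Type} [Fintype ι] [Fintype L] [Fintype M] [DecidableEq M]
    (μ : ι → ℝ) (hash : ι → L → M) : Prop :=
  IsPMF μ ∧ ∀ x₁ x₂ : L, x₁ ≠ x₂ →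
    ∑ i, μ i * (if hash i x₁ = hash i x₂ then (1 : ℝ) else 0) ≤ 1 / Fintype.card M

/-! The hashed key `F(L)` takes at most `|M|` values, so `I(F(L); Z) ≤ log |M| - H(F(L) | Z)`,
and `log x ≤ (x ^ ρ - 1) / ρ` turns `log |M| - H(F(L) | Z)` into a `ρ`-th moment of
`P_{F(L)|Z}`. Given `L = l`, the bucket of `l` carries the mass of `l` plus that of the
colliding inputs; by subadditivity of `t ↦ t ^ ρ`, Jensen's inequality and two-universality,
averaging over the hash function bounds the moment by `E[P_{L|Z}(L|Z) ^ ρ] + |M| ^ (-ρ)`,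
and the `|M| ^ (-ρ)` exactly cancels the `-1`. -/

open Finset

/-- `E[P_{A|B}(A|B) ^ ρ]` for a joint pmf `q` of `(A, B)`. -/
def condProbMoment {α β : Type} [Fintype α] [Fintype β] (ρ : ℝ) (q : α × β → ℝ) : ℝ :=
  ∑ a, ∑ b, q (a, b) * (q (a, b) / ∑ a', q (a', b)) ^ ρ

def mapFst {α β γ : Type} [Fintype α] [DecidableEq γ] (f : α → γ) (p : α × β → ℝ) :
    γ × β → ℝ :=
  fun cb => ∑ a, if f a = cb.1 then p (a, cb.2) else 0

lemma Real.log_le_rpow_sub_one_div {x ρ : ℝ} (hx : 0 < x) (hρ : 0 < ρ) :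
    Real.log x ≤ (x ^ ρ - 1) / ρ := by
  rw [le_div_iff₀ hρ, mul_comm, ← Real.log_rpow hx]
  exact Real.log_le_sub_one_of_pos (Real.rpow_pos_of_pos hx ρ)

lemma IsPMF.sum_mul_rpow_le {ι : Type} [Fintype ι] {μ : ι → ℝ} (hμ : IsPMF μ) {x : ι → ℝ}
    (hx : ∀ i, 0 ≤ x i) {ρ : ℝ} (hρ₀ : 0 ≤ ρ) (hρ₁ : ρ ≤ 1) :
    ∑ i, μ i * x i ^ ρ ≤ (∑ i, μ i * x i) ^ ρ :=
  (Real.concaveOn_rpow hρ₀ hρ₁).le_map_sum (fun i _ => hμ.1 i) hμ.2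
    (fun i _ => Set.mem_Ici.2 (hx i))

section Entropy

variable {α β : Type} [Fintype α] [Fintype β]

lemma IsPMF.nonempty {p : α → ℝ} (hp : IsPMF p) : Nonempty α := by
  by_contra h
  rw [not_nonempty_iff] at h
  simpa using hp.2

lemma IsPMF.sum_sum_eq_one {q : α × β → ℝ} (hq : IsPMF q) : ∑ a, ∑ b, q (a, b) = 1 := by
  rw [← Fintype.sum_prod_type', hq.2]

-- Jensen for the convex `x ↦ x log x` at the uniform weights.
lemma entropy_le_log_card {p : α → ℝ} (hp : IsPMF p) :
    entropy p ≤ Real.log (Fintype.card α) := by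
  have := hp.nonempty
  have hn : (0 : ℝ) < Fintype.card α := Nat.cast_pos.2 Fintype.card_pos
  have hJ := Real.convexOn_mul_log.map_sum_le (t := univ)
    (w := fun _ => 1 / (Fintype.card α : ℝ)) (p := p) (fun _ _ => by positivity)
    (by simp [card_univ, hn.ne']) (fun a _ => Set.mem_Ici.2 (hp.1 a))
  simp only [smul_eq_mul, ← mul_sum, hp.2, mul_one, one_div, Real.log_inv] at hJ
  rw [entropy]
  linarith [le_of_mul_le_mul_left hJ (inv_pos.2 hn)]

lemma mutualInfo_eq_entropy_sub_condEntropy {q : α × β → ℝ} (hq : ∀ x, 0 ≤ q x) :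
    mutualInfo q = entropy (fun a => ∑ b, q (a, b)) - condEntropy q := by
  have hterm : ∀ a b, q (a, b) * Real.log (q (a, b) / ((∑ b', q (a, b')) * ∑ a', q (a', b)))
      = q (a, b) * Real.log (q (a, b) / ∑ a', q (a', b))
        - q (a, b) * Real.log (∑ b', q (a, b')) := by
    intro a b
    rcases (hq (a, b)).eq_or_lt with h | h
    · simp [← h]
    have hA : 0 < ∑ b', q (a, b') :=
      h.trans_le (single_le_sum (f := fun b' => q (a, b')) (fun _ _ => hq _) (mem_univ b))
    have hB : 0 < ∑ a', q (a', b) :=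
      h.trans_le (single_le_sum (f := fun a' => q (a', b)) (fun _ _ => hq _) (mem_univ a))
    rw [mul_comm (∑ b', q (a, b')), ← div_div, Real.log_div (by positivity) hA.ne']
    ring
  simp only [mutualInfo, entropy, condEntropy, hterm, sum_sub_distrib, ← sum_mul]
  ring

lemma log_card_sub_condEntropy_le {q : α × β → ℝ} (hq : IsPMF q) {ρ : ℝ} (hρ : 0 < ρ) :
    Real.log (Fintype.card α) - condEntropy q
      ≤ ((Fintype.card α : ℝ) ^ ρ * condProbMoment ρ q - 1) / ρ := by
  set n : ℝ := (Fintype.card α : ℝ)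
  have hterm : ∀ a b,
      q (a, b) * Real.log n + q (a, b) * Real.log (q (a, b) / ∑ a', q (a', b))
      ≤ (n ^ ρ * (q (a, b) * (q (a, b) / ∑ a', q (a', b)) ^ ρ) - q (a, b)) / ρ := by
    intro a b
    rcases (hq.1 (a, b)).eq_or_lt with h | h
    · simp [← h]
    have hn : 0 < n := Nat.cast_pos.2 (Fintype.card_pos_iff.2 ⟨a⟩)
    have hB : 0 < ∑ a', q (a', b) :=
      h.trans_le (single_le_sum (f := fun a' => q (a', b)) (fun _ _ => hq.1 _) (mem_univ a))
    have hlog := Real.log_le_rpow_sub_one_div (x := n * (q (a, b) / ∑ a', q (a', b)))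
      (by positivity) hρ
    rw [Real.log_mul hn.ne' (by positivity), Real.mul_rpow hn.le (by positivity)] at hlog
    calc _ = q (a, b) * (Real.log n + Real.log (q (a, b) / ∑ a', q (a', b))) := by ring
      _ ≤ q (a, b) * ((n ^ ρ * (q (a, b) / ∑ a', q (a', b)) ^ ρ - 1) / ρ) :=
        mul_le_mul_of_nonneg_left hlog h.le
      _ = _ := by ring
  have hsum := sum_le_sum fun a (_ : a ∈ univ) => sum_le_sum fun b (_ : b ∈ univ) => hterm a b
  simp only [sum_add_distrib, ← sum_div, sum_sub_distrib, ← sum_mul, ← mul_sum,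
    hq.sum_sum_eq_one] at hsum
  rw [condEntropy, condProbMoment]
  linarith

lemma mutualInfo_le_condProbMoment {q : α × β → ℝ} (hq : IsPMF q) {ρ : ℝ} (hρ : 0 < ρ) :
    mutualInfo q ≤ ((Fintype.card α : ℝ) ^ ρ * condProbMoment ρ q - 1) / ρ := by
  have hmarg : IsPMF fun a => ∑ b, q (a, b) :=
    ⟨fun a => sum_nonneg fun b _ => hq.1 _, hq.sum_sum_eq_one⟩
  rw [mutualInfo_eq_entropy_sub_condEntropy hq.1]
  linarith [entropy_le_log_card hmarg, log_card_sub_condEntropy_le hq hρ]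

end Entropy

section MapFst

variable {α β γ : Type} [Fintype α] [Fintype γ] [DecidableEq γ]

lemma sum_mapFst_mul [Fintype β] (f : α → γ) (p : α × β → ℝ) (G : γ × β → ℝ) :
    ∑ c, ∑ b, mapFst f p (c, b) * G (c, b) = ∑ a, ∑ b, p (a, b) * G (f a, b) := by
  simp only [mapFst, sum_mul, ite_mul, zero_mul]
  rw [sum_comm]
  simp_rw [sum_comm (s := (univ : Finset γ))]
  rw [sum_comm]
  simp

lemma sum_mapFst_fst (f : α → γ) (p : α × β → ℝ) (b : β) :
    ∑ c, mapFst f p (c, b) = ∑ a, p (a, b) := by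
  simp only [mapFst]
  rw [sum_comm]
  simp

lemma IsPMF.mapFst [Fintype β] {p : α × β → ℝ} (hp : IsPMF p) (f : α → γ) :
    IsPMF (mapFst f p) := by
  refine ⟨fun _ => sum_nonneg fun _ _ => by split_ifs; exacts [hp.1 _, le_rfl], ?_⟩
  have := sum_mapFst_mul f p fun _ => 1
  simp only [mul_one] at this
  rw [Fintype.sum_prod_type, this, hp.sum_sum_eq_one]

lemma condProbMoment_mapFst [Fintype β] (ρ : ℝ) (f : α → γ) (p : α × β → ℝ) :
    condProbMoment ρ (mapFst f p)
      = ∑ a, ∑ b, p (a, b) * (mapFst f p (f a, b) / ∑ a', p (a', b)) ^ ρ := by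
  simp only [condProbMoment, sum_mapFst_fst]
  exact sum_mapFst_mul f p fun cb => (mapFst f p cb / ∑ a', p (a', cb.2)) ^ ρ

end MapFst

namespace TwoUniversal

variable {ι L M : Type} [Fintype ι] [Fintype L] [Fintype M] [DecidableEq M]
  {μ : ι → ℝ} {hash : ι → L → M}

lemma sum_mul_collisions_le [DecidableEq L] (h : TwoUniversal μ hash) {w : L → ℝ}
    (hw : ∀ l, 0 ≤ w l) (l : L) :
    ∑ i, μ i * ∑ l' ∈ univ.erase l, (if hash i l' = hash i l then w l' else 0)
      ≤ (∑ l', w l') / Fintype.card M := by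
  calc _ = ∑ l' ∈ univ.erase l, w l' * ∑ i, μ i * (if hash i l' = hash i l then 1 else 0) := by
        simp only [mul_sum]
        rw [sum_comm]
        exact sum_congr rfl fun l' _ => sum_congr rfl fun i _ => by split_ifs <;> ring
    _ ≤ ∑ l' ∈ univ.erase l, w l' * (1 / Fintype.card M) :=
        sum_le_sum fun l' hl' =>
          mul_le_mul_of_nonneg_left (h.2 l' l (ne_of_mem_erase hl')) (hw l')
    _ ≤ ∑ l', w l' * (1 / Fintype.card M) :=
        sum_le_sum_of_subset_of_nonneg (erase_subset _ _) fun _ _ _ =>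
          mul_nonneg (hw _) (by positivity)
    _ = _ := by rw [← sum_mul, mul_one_div]

lemma sum_mul_rpow_bucket_le (h : TwoUniversal μ hash) {w : L → ℝ} (hw : ∀ l, 0 ≤ w l)
    {ρ : ℝ} (hρ₀ : 0 ≤ ρ) (hρ₁ : ρ ≤ 1) (l : L) :
    ∑ i, μ i * (∑ l', if hash i l' = hash i l then w l' else 0) ^ ρ
      ≤ w l ^ ρ + ((∑ l', w l') / Fintype.card M) ^ ρ := by
  classical
  set C : ι → ℝ := fun i => ∑ l' ∈ univ.erase l, if hash i l' = hash i l then w l' else 0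
  have hC : ∀ i, 0 ≤ C i := fun i => sum_nonneg fun _ _ => by split_ifs; exacts [hw _, le_rfl]
  have hsplit : ∀ i, ∑ l', (if hash i l' = hash i l then w l' else 0) = w l + C i := fun i => by
    rw [← add_sum_erase _ _ (mem_univ l), if_pos rfl]
  calc _ ≤ ∑ i, μ i * (w l ^ ρ + C i ^ ρ) := sum_le_sum fun i _ => by
        rw [hsplit]
        exact mul_le_mul_of_nonneg_left (Real.rpow_add_le_add_rpow (hw l) (hC i) hρ₀ hρ₁)
          (h.1.1 i)
    _ = w l ^ ρ + ∑ i, μ i * C i ^ ρ := by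
        simp only [mul_add, sum_add_distrib, ← sum_mul, h.1.2, one_mul]
    _ ≤ w l ^ ρ + (∑ i, μ i * C i) ^ ρ := by
        gcongr
        exact h.1.sum_mul_rpow_le hC hρ₀ hρ₁
    _ ≤ _ := by
        gcongr
        · exact sum_nonneg fun i _ => mul_nonneg (h.1.1 i) (hC i)
        · exact h.sum_mul_collisions_le hw l

lemma sum_mul_condProbMoment_mapFst_le (h : TwoUniversal μ hash) {Z : Type} [Fintype Z]
    {p : L × Z → ℝ} (hp : IsPMF p) {ρ : ℝ} (hρ₀ : 0 ≤ ρ) (hρ₁ : ρ ≤ 1) :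
    ∑ i, μ i * condProbMoment ρ (mapFst (hash i) p)
      ≤ condProbMoment ρ p + (1 / Fintype.card M) ^ ρ := by
  have hbucket : ∀ l z, ∑ i, μ i * (mapFst (hash i) p (hash i l, z) / ∑ l', p (l', z)) ^ ρ
      ≤ (p (l, z) / ∑ l', p (l', z)) ^ ρ + (1 / Fintype.card M) ^ ρ := by
    intro l z
    set s := ∑ l', p (l', z)
    have hw : ∀ l', 0 ≤ p (l', z) / s :=
      fun l' => div_nonneg (hp.1 _) (sum_nonneg fun _ _ => hp.1 _)
    have hmass : ∑ l', p (l', z) / s ≤ 1 := by rw [← sum_div]; exact div_self_le_one s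
    have hbucket_eq : ∀ i, mapFst (hash i) p (hash i l, z) / s
        = ∑ l', if hash i l' = hash i l then p (l', z) / s else 0 := fun i => by
      simp only [mapFst, sum_div, ite_div, zero_div]
    simp only [hbucket_eq]
    refine (h.sum_mul_rpow_bucket_le hw hρ₀ hρ₁ l).trans ?_
    gcongr
    exact div_nonneg (sum_nonneg fun l' _ => hw l') (Nat.cast_nonneg _)
  calc _ = ∑ l, ∑ z, p (l, z) *
        ∑ i, μ i * (mapFst (hash i) p (hash i l, z) / ∑ l', p (l', z)) ^ ρ := by
        simp only [condProbMoment_mapFst, mul_sum]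
        rw [sum_comm]
        refine sum_congr rfl fun l _ => ?_
        rw [sum_comm]
        exact sum_congr rfl fun z _ => sum_congr rfl fun i _ => by ring
    _ ≤ ∑ l, ∑ z, p (l, z) *
        ((p (l, z) / ∑ l', p (l', z)) ^ ρ + (1 / Fintype.card M) ^ ρ) := by
        gcongr with l _ z _
        · exact hp.1 _
        · exact hbucket l z
    _ = _ := by
        simp only [mul_add, sum_add_distrib, ← sum_mul, hp.sum_sum_eq_one, one_mul]
        rfl

end TwoUniversal

/-- privacy amplification bound, Proposition 1 of the paper.
`p` is the joint pmf of `(L, Z)`; the hash choice `F` (pmf `μ` on `ι`) is independent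
of `(L, Z)`, so `I(F(L); Z | F) = ∑ i, μ i * I(hash i (L); Z)`, where the joint pmf of
`(hash i (L), Z)` is the pushforward of `p` under `hash i`.  Then for `0 < ρ ≤ 1`,
`I(F(L); Z | F) ≤ (1/ρ) |M|^ρ E[P_{L|Z}(L|Z)^ρ]`. -/
theorem stmt_0 {ι L Z M : Type} [Fintype ι] [Fintype L] [Fintype Z] [Fintype M]
    [DecidableEq M] [Nonempty M]
    (μ : ι → ℝ) (hash : ι → L → M) (hhash : TwoUniversal μ hash)
    (p : L × Z → ℝ) (hp : IsPMF p)
    (ρ : ℝ) (hρ₀ : 0 < ρ) (hρ₁ : ρ ≤ 1) :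
    ∑ i, μ i * mutualInfo (fun mz : M × Z =>
        ∑ l, if hash i l = mz.1 then p (l, mz.2) else 0)
      ≤ (1 / ρ) * (Fintype.card M : ℝ) ^ ρ *
        ∑ l, ∑ z, p (l, z) * (p (l, z) / ∑ l', p (l', z)) ^ ρ := by
  set n : ℝ := (Fintype.card M : ℝ)
  have hn : 0 < n := Nat.cast_pos.2 Fintype.card_pos
  have hμ := hhash.1
  calc ∑ i, μ i * mutualInfo (mapFst (hash i) p)
      ≤ ∑ i, μ i * ((n ^ ρ * condProbMoment ρ (mapFst (hash i) p) - 1) / ρ) :=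
        sum_le_sum fun i _ => mul_le_mul_of_nonneg_left
          (mutualInfo_le_condProbMoment (hp.mapFst (hash i)) hρ₀) (hμ.1 i)
    _ = (n ^ ρ * ∑ i, μ i * condProbMoment ρ (mapFst (hash i) p) - 1) / ρ := by
        have hterm : ∀ i, μ i * ((n ^ ρ * condProbMoment ρ (mapFst (hash i) p) - 1) / ρ)
            = n ^ ρ / ρ * (μ i * condProbMoment ρ (mapFst (hash i) p)) - μ i / ρ := fun i => by
          ring
        rw [sum_congr rfl fun i _ => hterm i, sum_sub_distrib, ← mul_sum, ← sum_div, hμ.2]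
        ring
    _ ≤ (n ^ ρ * (condProbMoment ρ p + (1 / n) ^ ρ) - 1) / ρ := by
        gcongr
        exact hhash.sum_mul_condProbMoment_mapFst_le hp hρ₀.le hρ₁
    _ = 1 / ρ * n ^ ρ * condProbMoment ρ p := by
        rw [mul_add, ← Real.mul_rpow hn.le (by positivity), mul_one_div_cancel hn.ne',
          Real.one_rpow]
        ring
end
end

section
/- For every finite set 𝓛, finite set 𝓩, channel W from 𝓛 to 𝓩, probability mass function P on 𝓛, and ρ with 0 < ρ < 1, one has exp(ψ(ρ, W, P)) ≤ exp(φ(ρ, W, P)), i.e., Σ_{z} Σ_{ℓ} P(ℓ) W(z|ℓ)^{1+ρ} (Σ_{ℓ'} P(ℓ') W(z|ℓ'))^{−ρ} ≤ Σ_{z} ( Σ_{ℓ} P(ℓ) W(z|ℓ)^{1/(1−ρ)} )^{1−ρ}. -/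
open scoped BigOperators

noncomputable section

/-!
Fix `z` and put `Q = ∑ v, P v W(z|v)`. Hölder's inequality for the weights `P v W(z|v)`, applied
to `W(z|v)^ρ` with exponent `1/(1-ρ)`, gives
`∑ v, P v W(z|v)^(1+ρ) ≤ Q^ρ (∑ v, P v W(z|v)^(1/(1-ρ)))^(1-ρ)`, and the factor `Q^ρ` is cancelled
by `Q^(-ρ)`. Summing over `z` gives the claim.
-/

section HolderWeights

variable {ι : Type*} (s : Finset ι) {p w : ι → ℝ} {ρ : ℝ}

theorem sum_mul_rpow_one_add_le (hp : ∀ i, 0 ≤ p i) (hw : ∀ i, 0 ≤ w i)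
    (hρ₀ : 0 ≤ ρ) (hρ₁ : ρ < 1) :
    ∑ i ∈ s, p i * w i ^ (1 + ρ)
      ≤ (∑ i ∈ s, p i * w i) ^ ρ * (∑ i ∈ s, p i * w i ^ (1 / (1 - ρ))) ^ (1 - ρ) := by
  have h1ρ : 0 < 1 - ρ := by linarith
  have hexp : 1 ≤ 1 / (1 - ρ) := by rw [le_div_iff₀ h1ρ]; linarith
  have holder := Real.inner_le_weight_mul_Lp_of_nonneg s hexp (fun i => p i * w i)
    (fun i => w i ^ ρ) (fun i => mul_nonneg (hp i) (hw i)) (fun i => Real.rpow_nonneg (hw i) _)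
  have hpow_one_add : ∀ i, p i * w i * w i ^ ρ = p i * w i ^ (1 + ρ) := fun i => by
    rw [Real.rpow_add' (hw i) (by linarith), Real.rpow_one, mul_assoc]
  have hpow_inv : ∀ i, p i * w i * (w i ^ ρ) ^ (1 / (1 - ρ)) = p i * w i ^ (1 / (1 - ρ)) :=
    fun i => by
      have he : 1 / (1 - ρ) = 1 + ρ * (1 / (1 - ρ)) := by field_simp; ring
      rw [← Real.rpow_mul (hw i), mul_assoc, ← Real.rpow_one_add' (hw i) (by rw [← he]; positivity),
        ← he]
  simp only [hpow_one_add, hpow_inv, inv_div, div_one, sub_sub_cancel] at holder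
  exact holder

theorem sum_mul_rpow_one_add_mul_rpow_neg_le (hp : ∀ i, 0 ≤ p i) (hw : ∀ i, 0 ≤ w i)
    (hρ₀ : 0 ≤ ρ) (hρ₁ : ρ < 1) :
    (∑ i ∈ s, p i * w i ^ (1 + ρ)) * (∑ i ∈ s, p i * w i) ^ (-ρ)
      ≤ (∑ i ∈ s, p i * w i ^ (1 / (1 - ρ))) ^ (1 - ρ) := by
  set Q := ∑ i ∈ s, p i * w i
  set R := (∑ i ∈ s, p i * w i ^ (1 / (1 - ρ))) ^ (1 - ρ)
  have hQ : 0 ≤ Q := Finset.sum_nonneg fun i _ => mul_nonneg (hp i) (hw i)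
  have hR : 0 ≤ R := Real.rpow_nonneg
    (Finset.sum_nonneg fun i _ => mul_nonneg (hp i) (Real.rpow_nonneg (hw i) _)) _
  calc (∑ i ∈ s, p i * w i ^ (1 + ρ)) * Q ^ (-ρ)
      ≤ Q ^ ρ * R * (Q ^ ρ)⁻¹ := by
        rw [Real.rpow_neg hQ]
        gcongr
        exact sum_mul_rpow_one_add_le s hp hw hρ₀ hρ₁
    _ = R * (Q ^ ρ * (Q ^ ρ)⁻¹) := by ring
    _ ≤ R := mul_le_of_le_one_right hR mul_inv_le_one

end HolderWeights

/-- Eq. (7) of the paper: `exp(ψ(ρ, W, P)) ≤ exp(φ(ρ, W, P))`, i.e.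
`∑ z ∑ v, P v * W v z ^ (1+ρ) * (∑ v', P v' * W v' z) ^ (-ρ)
   ≤ ∑ z, (∑ v, P v * W v z ^ (1/(1-ρ))) ^ (1-ρ)`
for every channel `W`, input pmf `P` and `0 < ρ < 1`
(terms whose inner sum is `0` vanish, since `(0 : ℝ) ^ (-ρ) = 0` for `Real.rpow`). -/
theorem stmt_3 {V Z : Type} [Fintype V] [Fintype Z]
    (W : V → Z → ℝ) (hW : IsChannel W)
    (P : V → ℝ) (hP : IsPMF P)
    (ρ : ℝ) (hρ₀ : 0 < ρ) (hρ₁ : ρ < 1) :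
    ∑ z, ∑ v, P v * W v z ^ (1 + ρ) * (∑ v', P v' * W v' z) ^ (-ρ)
      ≤ ∑ z, (∑ v, P v * W v z ^ (1 / (1 - ρ))) ^ (1 - ρ) := by
  refine Finset.sum_le_sum fun z _ => ?_
  rw [← Finset.sum_mul]
  exact sum_mul_rpow_one_add_mul_rpow_neg_le _ hP.1 (fun v => (hW v).1 z) hρ₀.le hρ₁
end
end

section
/- Let 𝓤, 𝓥, 𝓩 be finite sets, P_U a probability mass function on 𝓤, P_{V|U} a channel from 𝓤 to 𝓥, and W a channel from 𝓥 to 𝓩. Let the random variables (U, V, Z) be jointly distributed with U ~ P_U, V | U=u ~ P_{V|U}(·|u), and Z | V=v ~ W(·|v) (so that U → V → Z is a Markov chain). Then lim_{ρ → 0⁺} (1/ρ) · log ( Σ_{u∈𝓤} P_U(u) exp( φ(ρ, W, P_{V|U=u}) ) ) = I(V; Z | U), the conditional mutual information in natural base. -/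
open scoped BigOperators

noncomputable section

/-!
Write `F ρ = ∑ u, P_U u * exp (φ (ρ, W, P_{V|U=u}))`. At `ρ = 0` the inner power sums collapse to
`∑ z, ∑ v, P v * W v z = 1`, so `F 0 = 1` and the limit is the derivative of `log ∘ F` at `0`,
that is `F' 0`. For each `z`, with `s = ∑ v, P v * W v z`, the derivative at `0` of
`(∑ v, P v * W v z ^ (1/(1-ρ))) ^ (1-ρ)` is `∑ v, P v * W v z * log (W v z) - s * log s`
(the outer exponent contributes `-s log s`, the inner ones `W log W`), which is exactly
`∑ v, P v * W v z * log (W v z / s)`; summing over `z` and `u` gives `I(V; Z | U)`.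
-/

open Filter Topology Real Finset

lemma hasDerivAt_one_div_one_sub_zero : HasDerivAt (fun ρ : ℝ => 1 / (1 - ρ)) 1 0 := by
  simpa using ((hasDerivAt_id (0 : ℝ)).const_sub 1).fun_inv (by norm_num)

lemma hasDerivAt_rpow_one_div_one_sub {w : ℝ} (hw : 0 ≤ w) :
    HasDerivAt (fun ρ : ℝ => w ^ (1 / (1 - ρ))) (w * log w) 0 := by
  rcases hw.eq_or_lt with rfl | hw
  · have h : (fun ρ : ℝ => (0 : ℝ) ^ (1 / (1 - ρ))) =ᶠ[𝓝 0] fun _ => 0 := by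
      filter_upwards [eventually_ne_nhds (zero_ne_one' ℝ)] with ρ hρ
      exact zero_rpow (one_div_ne_zero (sub_ne_zero.2 hρ.symm))
    simpa using (hasDerivAt_const (0 : ℝ) (0 : ℝ)).congr_of_eventuallyEq h
  · simpa [mul_comm] using hasDerivAt_one_div_one_sub_zero.const_rpow hw

lemma sum_mul_mul_log_div {ι : Type*} [Fintype ι] {p w : ι → ℝ} (hp : ∀ i, 0 ≤ p i)
    (hw : ∀ i, 0 ≤ w i) :
    ∑ i, p i * w i * log (w i / ∑ j, p j * w j) =
      ∑ i, p i * (w i * log (w i)) - (∑ i, p i * w i) * log (∑ i, p i * w i) := by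
  set s := ∑ j, p j * w j
  rw [sum_mul, ← sum_sub_distrib]
  refine sum_congr rfl fun i _ => ?_
  rcases eq_or_ne (p i) 0 with hpi | hpi
  · simp [hpi]
  rcases (hw i).eq_or_lt with hwi | hwi
  · simp [← hwi]
  have hs_pos : 0 < s :=
    (mul_pos ((hp i).lt_of_ne' hpi) hwi).trans_le
      (single_le_sum (fun j _ => mul_nonneg (hp j) (hw j)) (mem_univ i))
  rw [log_div hwi.ne' hs_pos.ne']
  ring

lemma hasDerivAt_sum_mul_rpow_one_div_one_sub_rpow {ι : Type*} [Fintype ι] {p w : ι → ℝ}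
    (hp : ∀ i, 0 ≤ p i) (hw : ∀ i, 0 ≤ w i) :
    HasDerivAt (fun ρ : ℝ => (∑ i, p i * w i ^ (1 / (1 - ρ))) ^ (1 - ρ))
      (∑ i, p i * w i * log (w i / ∑ j, p j * w j)) 0 := by
  rw [sum_mul_mul_log_div hp hw]
  have hS : HasDerivAt (fun ρ : ℝ => ∑ i, p i * w i ^ (1 / (1 - ρ)))
      (∑ i, p i * (w i * log (w i))) 0 :=
    HasDerivAt.fun_sum fun i _ => (hasDerivAt_rpow_one_div_one_sub (hw i)).const_mul (p i)
  rcases (sum_nonneg fun i _ => mul_nonneg (hp i) (hw i)).eq_or_lt with hs | hs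
  · have hpw : ∀ i, p i = 0 ∨ w i = 0 := fun i =>
      mul_eq_zero.1 ((sum_eq_zero_iff_of_nonneg fun j _ => mul_nonneg (hp j) (hw j)).1 hs.symm i
        (mem_univ i))
    have hvanish :
        (fun ρ : ℝ => (∑ i, p i * w i ^ (1 / (1 - ρ))) ^ (1 - ρ)) =ᶠ[𝓝 0] fun _ => 0 := by
      filter_upwards [eventually_ne_nhds (zero_ne_one' ℝ)] with ρ hρ
      have hρ' : 1 - ρ ≠ 0 := sub_ne_zero.2 hρ.symm
      refine (congrArg (· ^ (1 - ρ)) (sum_eq_zero fun i _ => ?_)).trans (zero_rpow hρ')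
      rcases hpw i with hp0 | hw0
      · rw [hp0, zero_mul]
      · rw [hw0, zero_rpow (one_div_ne_zero hρ'), mul_zero]
    refine ((hasDerivAt_const (0 : ℝ) (0 : ℝ)).congr_of_eventuallyEq hvanish).congr_deriv ?_
    rw [← hs, sum_eq_zero fun i _ => by rcases hpw i with h | h <;> simp [h]]
    simp
  · refine (hS.rpow ((hasDerivAt_id (0 : ℝ)).const_sub 1) (by simpa using hs)).congr_deriv ?_
    simp [sub_eq_add_neg]

lemma IsPMF.sum_sum_mul_of_isChannel {V Z : Type} [Fintype V] [Fintype Z] {p : V → ℝ}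
    (hp : IsPMF p) {W : V → Z → ℝ} (hW : IsChannel W) : ∑ z, ∑ v, p v * W v z = 1 := by
  rw [sum_comm]
  simp [← mul_sum, (hW _).2, hp.2]

lemma tendsto_inv_mul_log_of_hasDerivAt {F : ℝ → ℝ} {L : ℝ} (hF : HasDerivAt F L 0)
    (hF0 : F 0 = 1) : Tendsto (fun ρ => (1 / ρ) * log (F ρ)) (𝓝[≠] 0) (𝓝 L) := by
  have h := hasDerivAt_iff_tendsto_slope.1 (hF.log (by simp [hF0]))
  rw [hF0, div_one] at h
  refine h.congr fun ρ => ?_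
  simp [slope_def_field, hF0, div_eq_inv_mul]

/-- as `ρ → 0⁺`,
`(1/ρ) log(∑ u, PU u * exp(φ(ρ, W, P_{V|U=u}))) → I(V; Z | U)`,
where `exp(φ(ρ, W, P)) = ∑ z, (∑ v, P v * W v z ^ (1/(1-ρ))) ^ (1-ρ)` and
`I(V; Z|U) = ∑ u, PU u * ∑ v ∑ z, PVU u v * W v z * log(W v z / ∑ v', PVU u v' * W v' z)`. -/
theorem stmt_7 {U V Z : Type} [Fintype U] [Fintype V] [Fintype Z]
    (PU : U → ℝ) (hPU : IsPMF PU)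
    (PVU : U → V → ℝ) (hPVU : IsChannel PVU)
    (W : V → Z → ℝ) (hW : IsChannel W) :
    Filter.Tendsto
      (fun ρ : ℝ => (1 / ρ) * Real.log (∑ u, PU u *
        ∑ z, (∑ v, PVU u v * W v z ^ (1 / (1 - ρ))) ^ (1 - ρ)))
      (nhdsWithin 0 (Set.Ioi 0))
      (nhds (∑ u, PU u * ∑ v, ∑ z, PVU u v * W v z *
        Real.log (W v z / ∑ v', PVU u v' * W v' z))) := by
  have hF0 : (∑ u, PU u * ∑ z, (∑ v, PVU u v * W v z ^ (1 / (1 - 0 : ℝ))) ^ (1 - 0 : ℝ)) = 1 := by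
    simp [(hPVU _).sum_sum_mul_of_isChannel hW, hPU.2]
  have hF : HasDerivAt
      (fun ρ : ℝ => ∑ u, PU u * ∑ z, (∑ v, PVU u v * W v z ^ (1 / (1 - ρ))) ^ (1 - ρ))
      (∑ u, PU u * ∑ v, ∑ z, PVU u v * W v z * Real.log (W v z / ∑ v', PVU u v' * W v' z)) 0 := by
    refine HasDerivAt.fun_sum fun u _ => ?_
    rw [sum_comm]
    exact (HasDerivAt.fun_sum fun z _ => hasDerivAt_sum_mul_rpow_one_div_one_sub_rpow
      (hPVU u).1 fun v => (hW v).1 z).const_mul (PU u)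
  exact (tendsto_inv_mul_log_of_hasDerivAt hF hF0).mono_left
    (nhdsWithin_mono _ fun ρ hρ => ne_of_gt hρ)
end
end

section
/- Let 𝓥 and 𝓩 be finite sets, W a channel from 𝓥 to 𝓩, and n ≥ 1. Then for every ρ with 0 < ρ < 1: max over all probability mass functions Pₙ on 𝓥ⁿ of φ(ρ, W^{⊗n}, Pₙ) equals n times the max over all probability mass functions P on 𝓥 of φ(ρ, W, P); equivalently, max_{Pₙ} exp(φ(ρ, W^{⊗n}, Pₙ)) = ( max_{P} exp(φ(ρ, W, P)) )ⁿ, where W^{⊗n}(zⁿ|vⁿ) = ∏_{i=1}^{n} W(z_i|v_i). -/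
open scoped BigOperators

noncomputable section

/-!
Write `β = 1 - ρ` and `expPhi ρ W P = ∑ z, (∑ v, P v * W v z ^ (1 / β)) ^ β`, so that
`φ(ρ, W, P) = log (expPhi ρ W P)`. On nonnegative weights `expPhi ρ W` is positively homogeneous
of degree `β`, so a bound `expPhi ρ W ≤ C` on the simplex gives `expPhi ρ W g ≤ C (∑ g) ^ β` for
every `g ≥ 0`. For a product channel `W₁ ⊗ W₂` and a joint input `P`, fixing the second output
`z₂` leaves the unnormalised input `a ↦ ∑ b, P (a, b) W₂ b z₂ ^ (1 / β)` to `W₁`; bounding each of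
these and summing over `z₂` gives `expPhi (W₁ ⊗ W₂) P ≤ C₁ · expPhi W₂ P₂ ≤ C₁ C₂`, with `P₂` the
second marginal of `P`. By induction `expPhi W^{⊗n} ≤ (max expPhi W) ^ n`, and the i.i.d. input
built from a maximiser attains this bound because `expPhi` factorises over product channels and
product inputs.
-/

open Finset

def expPhi {A Z : Type} [Fintype A] [Fintype Z] (ρ : ℝ) (W : A → Z → ℝ) (P : A → ℝ) : ℝ :=
  ∑ z, (∑ a, P a * W a z ^ (1 / (1 - ρ))) ^ (1 - ρ)

lemma IsPMF.exists_pos {A : Type} [Fintype A] {p : A → ℝ} (hp : IsPMF p) : ∃ a, 0 < p a := by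
  by_contra! h
  have : ∑ a, p a = 0 := sum_eq_zero fun a _ => le_antisymm (h a) (hp.1 a)
  exact one_ne_zero (hp.2.symm.trans this)

lemma IsPMF.pi {ι V : Type} [Fintype ι] [DecidableEq ι] [Fintype V] {P : ι → V → ℝ}
    (hP : ∀ i, IsPMF (P i)) : IsPMF fun v : ι → V => ∏ i, P i (v i) :=
  ⟨fun _ => prod_nonneg fun i _ => (hP i).1 _, by simp [← Fintype.prod_sum, (hP _).2]⟩

section

variable {A B Z Z₁ Z₂ : Type} [Fintype A] [Fintype B] [Fintype Z] [Fintype Z₁] [Fintype Z₂]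
  {ρ : ℝ}

lemma expPhi_pos {W : A → Z → ℝ} (hW : IsChannel W) {P : A → ℝ} (hP : IsPMF P) :
    0 < expPhi ρ W P := by
  obtain ⟨a, ha⟩ := hP.exists_pos
  obtain ⟨z, hz⟩ := (hW a).exists_pos
  have hterm : ∀ a z, 0 ≤ P a * W a z ^ (1 / (1 - ρ)) := fun a z =>
    mul_nonneg (hP.1 a) (Real.rpow_nonneg ((hW a).1 z) _)
  have hinner : 0 < ∑ a, P a * W a z ^ (1 / (1 - ρ)) :=
    (mul_pos ha (Real.rpow_pos_of_pos hz _)).trans_le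
      (single_le_sum (fun a _ => hterm a z) (mem_univ a))
  exact (Real.rpow_pos_of_pos hinner _).trans_le
    (single_le_sum (fun z _ => Real.rpow_nonneg (sum_nonneg fun a _ => hterm a z) _) (mem_univ z))

lemma expPhi_smul {W : A → Z → ℝ} (hW : ∀ a z, 0 ≤ W a z) {P : A → ℝ} (hP : ∀ a, 0 ≤ P a)
    {c : ℝ} (hc : 0 ≤ c) : expPhi ρ W (c • P) = c ^ (1 - ρ) * expPhi ρ W P := by
  simp only [expPhi, mul_sum, Pi.smul_apply, smul_eq_mul, mul_assoc]
  refine sum_congr rfl fun z _ => ?_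
  rw [← mul_sum, Real.mul_rpow hc
    (sum_nonneg fun a _ => mul_nonneg (hP a) (Real.rpow_nonneg (hW a z) _))]

lemma expPhi_le_mul_sum_rpow (hρ : ρ < 1) {W : A → Z → ℝ} (hW : ∀ a z, 0 ≤ W a z) {C : ℝ}
    (hC : ∀ Q, IsPMF Q → expPhi ρ W Q ≤ C) {g : A → ℝ} (hg : ∀ a, 0 ≤ g a) :
    expPhi ρ W g ≤ C * (∑ a, g a) ^ (1 - ρ) := by
  have hβ : 1 - ρ ≠ 0 := by linarith
  obtain hs | hs := (sum_nonneg fun a _ => hg a : 0 ≤ ∑ a, g a).eq_or_lt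
  · obtain rfl : g = 0 :=
      funext fun a => (sum_eq_zero_iff_of_nonneg fun a _ => hg a).1 hs.symm a (mem_univ a)
    simp [expPhi, Real.zero_rpow hβ]
  set s := ∑ a, g a
  have hQ : IsPMF (s⁻¹ • g) :=
    ⟨fun a => mul_nonneg (inv_nonneg.2 hs.le) (hg a),
      by simp only [Pi.smul_apply, smul_eq_mul, ← mul_sum]; exact inv_mul_cancel₀ hs.ne'⟩
  calc expPhi ρ W g = s ^ (1 - ρ) * expPhi ρ W (s⁻¹ • g) := by
        rw [← expPhi_smul hW hQ.1 hs.le, smul_smul, mul_inv_cancel₀ hs.ne', one_smul]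
    _ ≤ s ^ (1 - ρ) * C := by gcongr; exact hC _ hQ
    _ = C * s ^ (1 - ρ) := mul_comm _ _

lemma expPhi_prod_le (hρ : ρ < 1) {W₁ : A → Z₁ → ℝ} {W₂ : B → Z₂ → ℝ}
    (hW₁ : ∀ a z, 0 ≤ W₁ a z) (hW₂ : ∀ b z, 0 ≤ W₂ b z) {C₁ C₂ : ℝ} (hC₁ : 0 ≤ C₁)
    (h₁ : ∀ Q, IsPMF Q → expPhi ρ W₁ Q ≤ C₁) (h₂ : ∀ Q, IsPMF Q → expPhi ρ W₂ Q ≤ C₂)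
    {P : A × B → ℝ} (hP : IsPMF P) :
    expPhi ρ (fun (p : A × B) (q : Z₁ × Z₂) => W₁ p.1 q.1 * W₂ p.2 q.2) P ≤ C₁ * C₂ := by
  let g : Z₂ → A → ℝ := fun z₂ a => ∑ b, P (a, b) * W₂ b z₂ ^ (1 / (1 - ρ))
  have hg : ∀ z₂ a, 0 ≤ g z₂ a := fun z₂ a =>
    sum_nonneg fun b _ => mul_nonneg (hP.1 _) (Real.rpow_nonneg (hW₂ b z₂) _)
  have hmarg : IsPMF fun b => ∑ a, P (a, b) :=
    ⟨fun b => sum_nonneg fun a _ => hP.1 _, by rw [sum_comm, ← Fintype.sum_prod_type', hP.2]⟩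
  have hsplit : expPhi ρ (fun (p : A × B) (q : Z₁ × Z₂) => W₁ p.1 q.1 * W₂ p.2 q.2) P
      = ∑ z₂, expPhi ρ W₁ (g z₂) := by
    simp only [expPhi, Fintype.sum_prod_type]
    rw [sum_comm]
    refine sum_congr rfl fun z₂ _ => sum_congr rfl fun z₁ _ => ?_
    simp only [g, sum_mul]
    congr 1
    refine sum_congr rfl fun a _ => sum_congr rfl fun b _ => ?_
    rw [Real.mul_rpow (hW₁ a z₁) (hW₂ b z₂)]
    ring
  have hg_sum : ∀ z₂, ∑ a, g z₂ a = ∑ b, (∑ a, P (a, b)) * W₂ b z₂ ^ (1 / (1 - ρ)) := fun z₂ => by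
    simp only [g, sum_mul]
    exact sum_comm
  calc _ = ∑ z₂, expPhi ρ W₁ (g z₂) := hsplit
    _ ≤ ∑ z₂, C₁ * (∑ a, g z₂ a) ^ (1 - ρ) :=
        sum_le_sum fun z₂ _ => expPhi_le_mul_sum_rpow hρ hW₁ h₁ (hg z₂)
    _ = C₁ * expPhi ρ W₂ fun b => ∑ a, P (a, b) := by simp only [hg_sum, expPhi, mul_sum]
    _ ≤ C₁ * C₂ := mul_le_mul_of_nonneg_left (h₂ _ hmarg) hC₁

lemma expPhi_comp_equiv {A' Z' : Type} [Fintype A'] [Fintype Z'] (eA : A' ≃ A) (eZ : Z' ≃ Z)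
    (W : A → Z → ℝ) (P : A → ℝ) :
    expPhi ρ (fun a z => W (eA a) (eZ z)) (P ∘ eA) = expPhi ρ W P := by
  rw [expPhi, expPhi, ← eZ.sum_comp]
  refine sum_congr rfl fun z _ => ?_
  rw [← eA.sum_comp]
  rfl

lemma exists_isPMF_forall_expPhi_le [Nonempty A] (hρ : ρ < 1) (W : A → Z → ℝ) :
    ∃ P, IsPMF P ∧ ∀ Q, IsPMF Q → expPhi ρ W Q ≤ expPhi ρ W P := by
  classical
  have hcont : Continuous (expPhi ρ W) :=
    continuous_finsetSum _ fun z _ => (Real.continuous_rpow_const (by linarith)).comp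
      (continuous_finsetSum _ fun a _ => (continuous_apply a).mul continuous_const)
  obtain ⟨a⟩ := ‹Nonempty A›
  obtain ⟨P, hP, hmax⟩ := (isCompact_stdSimplex ℝ A).exists_isMaxOn
    ⟨_, single_mem_stdSimplex ℝ a⟩ hcont.continuousOn
  exact ⟨P, hP, fun Q hQ => hmax hQ⟩

end

lemma expPhi_pi_prod {ι V Z : Type} [Fintype ι] [DecidableEq ι] [Fintype V] [Fintype Z] {ρ : ℝ}
    {W : ι → V → Z → ℝ} (hW : ∀ i v z, 0 ≤ W i v z) {P : ι → V → ℝ} (hP : ∀ i v, 0 ≤ P i v) :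
    expPhi ρ (fun (v : ι → V) (z : ι → Z) => ∏ i, W i (v i) (z i)) (fun v => ∏ i, P i (v i))
      = ∏ i, expPhi ρ (W i) (P i) := by
  simp only [expPhi]
  rw [Fintype.prod_sum]
  refine sum_congr rfl fun z _ => ?_
  have hinner : ∑ v : ι → V, (∏ i, P i (v i)) * (∏ i, W i (v i) (z i)) ^ (1 / (1 - ρ))
      = ∏ i, ∑ a, P i a * W i a (z i) ^ (1 / (1 - ρ)) := by
    rw [Fintype.prod_sum]
    refine sum_congr rfl fun v _ => ?_
    rw [← Real.finsetProd_rpow _ _ fun i _ => hW _ _ _, ← prod_mul_distrib]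
  rw [hinner, Real.finsetProd_rpow _ _ fun i _ =>
    sum_nonneg fun a _ => mul_nonneg (hP i a) (Real.rpow_nonneg (hW i a (z i)) _)]

lemma expPhi_pi_le {V Z : Type} [Fintype V] [Fintype Z] {ρ : ℝ} (hρ : ρ < 1)
    {W : V → Z → ℝ} (hW : ∀ v z, 0 ≤ W v z) {C : ℝ} (hC : 0 ≤ C)
    (hmax : ∀ P, IsPMF P → expPhi ρ W P ≤ C) :
    ∀ (n : ℕ) (Pn : (Fin n → V) → ℝ), IsPMF Pn →
      expPhi ρ (fun (v : Fin n → V) (z : Fin n → Z) => ∏ i, W (v i) (z i)) Pn ≤ C ^ n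
  | 0, Pn, hPn => by
    have hPn_default : Pn default = 1 := by simpa using hPn.2
    simp [expPhi, hPn_default]
  | n + 1, Pn, hPn => by
    let eV := Fin.consEquiv fun _ : Fin (n + 1) => V
    rw [← expPhi_comp_equiv eV (Fin.consEquiv fun _ => Z), pow_succ']
    simp only [eV, Fin.consEquiv_apply, Fin.prod_univ_succ, Fin.cons_zero, Fin.cons_succ]
    exact expPhi_prod_le hρ hW (fun v z => prod_nonneg fun i _ => hW _ _) hC hmax
      (expPhi_pi_le hρ hW hC hmax n) ⟨fun _ => hPn.1 _, by rw [← hPn.2]; exact eV.sum_comp Pn⟩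

lemma sSup_image_log_eq {α : Type} {s : Set α} {f : α → ℝ} {a : α} (ha : a ∈ s)
    (hpos : ∀ x ∈ s, 0 < f x) (hmax : ∀ x ∈ s, f x ≤ f a) :
    sSup ((fun x => Real.log (f x)) '' s) = Real.log (f a) :=
  IsGreatest.csSup_eq ⟨⟨a, ha, rfl⟩, by
    rintro _ ⟨x, hx, rfl⟩
    exact Real.log_le_log (hpos x hx) (hmax x hx)⟩

theorem stmt_10_general {V Z : Type} [Fintype V] [Fintype Z] [Nonempty V]
    (W : V → Z → ℝ) (hW : IsChannel W)
    (n : ℕ)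
    (ρ : ℝ) (hρ₁ : ρ < 1) :
    sSup ((fun Pn : (Fin n → V) → ℝ =>
        Real.log (∑ z : Fin n → Z,
          (∑ v : Fin n → V, Pn v * (∏ i, W (v i) (z i)) ^ (1 / (1 - ρ))) ^ (1 - ρ)))
      '' {Pn | IsPMF Pn})
      = n * sSup ((fun P : V → ℝ =>
          Real.log (∑ z, (∑ v, P v * W v z ^ (1 / (1 - ρ))) ^ (1 - ρ)))
        '' {P | IsPMF P}) := by
  let Wn := fun (v : Fin n → V) (z : Fin n → Z) => ∏ i, W (v i) (z i)
  have hWnn : ∀ v z, 0 ≤ W v z := fun v => (hW v).1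
  obtain ⟨P, hP, hmax⟩ := exists_isPMF_forall_expPhi_le hρ₁ W
  have hWn : IsChannel Wn := fun v => IsPMF.pi fun i => hW (v i)
  have hPn : IsPMF fun v : Fin n → V => ∏ i, P (v i) := IsPMF.pi fun _ => hP
  have hiid : expPhi ρ Wn (fun v => ∏ i, P (v i)) = expPhi ρ W P ^ n := by
    rw [expPhi_pi_prod (fun _ => hWnn) (fun _ => hP.1), prod_const, card_fin]
  change sSup ((fun Pn => Real.log (expPhi ρ Wn Pn)) '' _)
    = n * sSup ((fun P => Real.log (expPhi ρ W P)) '' _)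
  rw [sSup_image_log_eq (s := {P | IsPMF P}) hP (fun Q hQ => expPhi_pos hW hQ) hmax,
    ← Real.log_pow, ← hiid,
    sSup_image_log_eq (s := {Pn | IsPMF Pn}) hPn (fun Q hQ => expPhi_pos hWn hQ)]
  intro Q hQ
  rw [hiid]
  exact expPhi_pi_le hρ₁ hWnn (expPhi_pos hW hP).le hmax n Q hQ

/-- Eq. (13) of the paper, due to Arimoto: for `0 < ρ < 1`,
`max_{Pₙ on Vⁿ} φ(ρ, W^{⊗n}, Pₙ) = n * max_{P on V} φ(ρ, W, P)`,
where the maxima (over the compact probability simplices, hence attained) are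
expressed via `sSup` of the images, and
`φ(ρ, W, P) = log ∑ z, (∑ v, P v * W v z ^ (1/(1-ρ))) ^ (1-ρ)`,
`W^{⊗n}(zⁿ|vⁿ) = ∏ i, W (v i) (z i)`. -/
theorem stmt_10 {V Z : Type} [Fintype V] [Fintype Z] [Nonempty V]
    (W : V → Z → ℝ) (hW : IsChannel W)
    (n : ℕ) (hn : 1 ≤ n)
    (ρ : ℝ) (hρ₀ : 0 < ρ) (hρ₁ : ρ < 1) :
    sSup ((fun Pn : (Fin n → V) → ℝ =>
        Real.log (∑ z : Fin n → Z,
          (∑ v : Fin n → V, Pn v * (∏ i, W (v i) (z i)) ^ (1 / (1 - ρ))) ^ (1 - ρ)))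
      '' {Pn | IsPMF Pn})
      = n * sSup ((fun P : V → ℝ =>
          Real.log (∑ z, (∑ v, P v * W v z ^ (1 / (1 - ρ))) ^ (1 - ρ)))
        '' {P | IsPMF P}) :=
  stmt_10_general W hW n ρ hρ₁
end
end

section
/- Let A, B, C be mutually independent random variables on finite sets. Then the mutual information (in natural base) between the pairs (A, B) and (A, C) equals the entropy of A: I( (A,B) ; (A,C) ) = H(A). Consequently, if for each n ≥ 2 one takes Aₙ uniformly distributed on {0,1}^{mₙ} with mₙ = ⌈n / log n⌉, Bₙ and Cₙ arbitrary finite-valued random variables with Aₙ, Bₙ, Cₙ mutually independent, and sets Sₙ = (Aₙ, Bₙ) and Zₙ = (Aₙ, Cₙ), then I(Sₙ; Zₙ)/n → 0 while I(Sₙ; Zₙ) = mₙ · log 2 → ∞ as n → ∞; i.e., the weak security criterion is satisfied although the adversary learns an unbounded amount of information about the secret message. -/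
open scoped BigOperators

noncomputable section

/-- Auxiliary: the first part of Statement 14. -/
theorem aux_part1 {α β γ : Type} [Fintype α] [Fintype β] [Fintype γ] [DecidableEq α]
    (pA : α → ℝ) (pB : β → ℝ) (pC : γ → ℝ)
    (hA : IsPMF pA) (hB : IsPMF pB) (hC : IsPMF pC) :
    mutualInfo (fun x : (α × β) × (α × γ) =>
        if x.1.1 = x.2.1 then pA x.1.1 * pB x.1.2 * pC x.2.2 else 0)
      = entropy pA := by
  classical
  obtain ⟨hA0, hA1⟩ := hA
  obtain ⟨hB0, hB1⟩ := hB
  obtain ⟨hC0, hC1⟩ := hC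
  have m1 : ∀ x : α × β, (∑ y : α × γ,
      (if x.1 = y.1 then pA x.1 * pB x.2 * pC y.2 else 0)) = pA x.1 * pB x.2 := by
    intro x
    rw [Fintype.sum_prod_type]
    have h1 : ∀ a2 : α, (∑ c : γ, if x.1 = a2 then pA x.1 * pB x.2 * pC c else 0)
        = if x.1 = a2 then pA x.1 * pB x.2 else 0 := by
      intro a2
      by_cases h : x.1 = a2
      · simp [h, ← Finset.mul_sum, hC1]
      · simp [h]
    rw [Finset.sum_congr rfl fun a2 _ => h1 a2, Finset.sum_ite_eq]
    simp
  have m2 : ∀ y : α × γ, (∑ x : α × β,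
      (if x.1 = y.1 then pA x.1 * pB x.2 * pC y.2 else 0)) = pA y.1 * pC y.2 := by
    intro y
    rw [Fintype.sum_prod_type]
    have h1 : ∀ a1 : α, (∑ b : β, if a1 = y.1 then pA a1 * pB b * pC y.2 else 0)
        = if a1 = y.1 then pA a1 * pC y.2 else 0 := by
      intro a1
      by_cases h : a1 = y.1
      · simp only [h, if_true]
        rw [Finset.sum_congr rfl fun b _ =>
          show pA y.1 * pB b * pC y.2 = pB b * (pA y.1 * pC y.2) by ring,
          ← Finset.sum_mul, hB1, one_mul]
      · simp [h]
    rw [Finset.sum_congr rfl fun a1 _ => h1 a1, Finset.sum_ite_eq']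
    simp
  unfold mutualInfo entropy
  simp only
  have key : ∀ (x : α × β) (y : α × γ),
      (if x.1 = y.1 then pA x.1 * pB x.2 * pC y.2 else 0) *
        Real.log ((if x.1 = y.1 then pA x.1 * pB x.2 * pC y.2 else 0) /
          ((∑ b' : α × γ, if x.1 = b'.1 then pA x.1 * pB x.2 * pC b'.2 else 0) *
           (∑ a' : α × β, if a'.1 = y.1 then pA a'.1 * pB a'.2 * pC y.2 else 0)))
      = pB x.2 * (pC y.2 * (if x.1 = y.1 then -(pA x.1 * Real.log (pA x.1)) else 0)) := by
    intro x y
    rw [m1 x, m2 y]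
    by_cases h : x.1 = y.1
    · simp only [h, if_true]
      rw [← h]
      by_cases hq : pA x.1 * pB x.2 * pC y.2 = 0
      · rw [hq, zero_mul]
        rcases mul_eq_zero.1 hq with h' | hc
        · rcases mul_eq_zero.1 h' with ha | hb
          · simp [ha]
          · simp [hb]
        · simp [hc]
      · have ha : pA x.1 ≠ 0 := fun h0 => hq (by rw [h0]; ring)
        have hb : pB x.2 ≠ 0 := fun h0 => hq (by rw [h0]; ring)
        have hc : pC y.2 ≠ 0 := fun h0 => hq (by rw [h0]; ring)
        have hd : pA x.1 * pB x.2 * pC y.2 / (pA x.1 * pB x.2 * (pA x.1 * pC y.2))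
            = (pA x.1)⁻¹ := by
          field_simp
        rw [hd, Real.log_inv]
        ring
    · simp [h]
  rw [Finset.sum_congr rfl fun x _ => Finset.sum_congr rfl fun y _ => key x y]
  have m3 : ∀ x : α × β, (∑ y : α × γ,
      pC y.2 * (if x.1 = y.1 then -(pA x.1 * Real.log (pA x.1)) else 0))
      = -(pA x.1 * Real.log (pA x.1)) := by
    intro x
    rw [Fintype.sum_prod_type]
    have h1 : ∀ a2 : α, (∑ c : γ,
        pC c * (if x.1 = a2 then -(pA x.1 * Real.log (pA x.1)) else 0))
        = if x.1 = a2 then -(pA x.1 * Real.log (pA x.1)) else 0 := fun a2 => by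
      rw [← Finset.sum_mul, hC1, one_mul]
    rw [Finset.sum_congr rfl fun a2 _ => h1 a2, Finset.sum_ite_eq]
    simp
  simp only [← Finset.mul_sum]
  rw [Finset.sum_congr rfl fun x _ => by rw [m3 x]]
  rw [Fintype.sum_prod_type]
  have h2 : ∀ a1 : α, (∑ b : β, pB b * -(pA a1 * Real.log (pA a1)))
      = -(pA a1 * Real.log (pA a1)) := fun a1 => by
    rw [← Finset.sum_mul, hB1, one_mul]
  rw [Finset.sum_congr rfl fun a1 _ => h2 a1]
  rw [← Finset.sum_neg_distrib]

/-- Auxiliary: the uniform distribution on `{0,1}^m` is a pmf. -/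
theorem aux_unifPMF (m : ℕ) : IsPMF (fun _ : Fin m → Bool => ((1 : ℝ) / 2) ^ m) := by
  constructor
  · intro a; positivity
  · rw [Finset.sum_const, Finset.card_univ]
    simp only [Fintype.card_fun, Fintype.card_bool, Fintype.card_fin, nsmul_eq_mul]
    push_cast
    rw [← mul_pow]
    norm_num

/-- Auxiliary: the entropy of the uniform distribution on `{0,1}^m` is `m log 2`. -/
theorem aux_unifEnt (m : ℕ) :
    entropy (fun _ : Fin m → Bool => ((1 : ℝ) / 2) ^ m) = m * Real.log 2 := by
  unfold entropy
  rw [Finset.sum_const, Finset.card_univ]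
  simp only [Fintype.card_fun, Fintype.card_bool, Fintype.card_fin, nsmul_eq_mul]
  rw [Real.log_pow]
  have h1 : (2 : ℝ) ^ m * ((1 : ℝ) / 2) ^ m = 1 := by
    rw [← mul_pow]; norm_num
  have h2 : Real.log (1 / 2) = -Real.log 2 := by
    rw [one_div, Real.log_inv]
  push_cast
  rw [h2]
  linear_combination ((m : ℝ) * Real.log 2) * h1

/-- Auxiliary: `n / log n → ∞`. -/
theorem aux_divlog_atTop : Filter.Tendsto (fun n : ℕ => (n : ℝ) / Real.log n)
    Filter.atTop Filter.atTop := by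
  have h0 : Filter.Tendsto (fun x : ℝ => Real.log x / x) Filter.atTop (nhds 0) := by
    simpa using Real.isLittleO_log_id_atTop.tendsto_div_nhds_zero
  have h1 : Filter.Tendsto (fun x : ℝ => Real.log x / x) Filter.atTop
      (nhdsWithin 0 (Set.Ioi 0)) := by
    rw [tendsto_nhdsWithin_iff]
    refine ⟨h0, ?_⟩
    filter_upwards [Filter.eventually_gt_atTop (1 : ℝ)] with x hx
    exact Set.mem_Ioi.2 (div_pos (Real.log_pos hx) (lt_trans one_pos hx))
  have h2 : Filter.Tendsto (fun x : ℝ => x / Real.log x) Filter.atTop Filter.atTop := by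
    refine h1.inv_tendsto_nhdsGT_zero.congr' ?_
    filter_upwards [Filter.eventually_gt_atTop (1 : ℝ)] with x hx
    simp [Pi.inv_apply, inv_div]
  exact h2.comp tendsto_natCast_atTop_atTop

/-- insecurity of the weak criterion, Section I of the paper.
First part: if `A`, `B`, `C` are mutually independent (joint pmf
`pA x.1.1 * pB x.1.2 * pC x.2.2` on the event `{x.1.1 = x.2.1}` for the pair
`(S, Z) = ((A,B),(A,C))`), then `I((A,B);(A,C)) = H(A)`.
Second part: with `Aₙ` uniform on `{0,1}^{mₙ}`, `mₙ = ⌈n / log n⌉`, and `Bₙ`, `Cₙ`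
arbitrary, `Sₙ = (Aₙ, Bₙ)`, `Zₙ = (Aₙ, Cₙ)` satisfy `I(Sₙ; Zₙ)/n → 0` (weak security)
while `I(Sₙ; Zₙ) = mₙ log 2` for `n ≥ 2` and `I(Sₙ; Zₙ) → ∞`. -/
theorem stmt_14 :
    (∀ (α β γ : Type) [Fintype α] [Fintype β] [Fintype γ] [DecidableEq α]
      (pA : α → ℝ) (pB : β → ℝ) (pC : γ → ℝ),
      IsPMF pA → IsPMF pB → IsPMF pC →
      mutualInfo (fun x : (α × β) × (α × γ) =>
          if x.1.1 = x.2.1 then pA x.1.1 * pB x.1.2 * pC x.2.2 else 0)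
        = entropy pA)
    ∧
    (∀ (β γ : ℕ → Type) [∀ n, Fintype (β n)] [∀ n, Fintype (γ n)]
      (pB : ∀ n, β n → ℝ) (pC : ∀ n, γ n → ℝ),
      (∀ n, IsPMF (pB n)) → (∀ n, IsPMF (pC n)) →
      ∀ m : ℕ → ℕ, (∀ n, m n = ⌈(n : ℝ) / Real.log n⌉₊) →
      ∀ MI : ℕ → ℝ,
      (∀ n, MI n = mutualInfo
        (fun x : ((Fin (m n) → Bool) × β n) × ((Fin (m n) → Bool) × γ n) =>
          if x.1.1 = x.2.1
            then ((1 : ℝ) / 2) ^ m n * pB n x.1.2 * pC n x.2.2 else 0)) →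
      (Filter.Tendsto (fun n => MI n / n) Filter.atTop (nhds 0)
        ∧ (∀ n, 2 ≤ n → MI n = m n * Real.log 2)
        ∧ Filter.Tendsto MI Filter.atTop Filter.atTop)) := by
  constructor
  · intro α β γ _ _ _ _ pA pB pC hA hB hC
    exact aux_part1 pA pB pC hA hB hC
  · intro β γ _ _ pB pC hB hC m hm MI hMI
    have hMIeq : ∀ n, MI n = (m n : ℝ) * Real.log 2 := by
      intro n
      rw [hMI n]
      exact (aux_part1 (fun _ : Fin (m n) → Bool => ((1 : ℝ) / 2) ^ m n)
        (pB n) (pC n) (aux_unifPMF (m n)) (hB n) (hC n)).trans (aux_unifEnt (m n))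
    have hlog2 : (0 : ℝ) < Real.log 2 := Real.log_pos one_lt_two
    have hmle : ∀ᶠ n : ℕ in Filter.atTop, (m n : ℝ) ≤ (n : ℝ) / Real.log n + 1 := by
      filter_upwards [Filter.eventually_ge_atTop 2] with n hn
      have hln : (0 : ℝ) < Real.log n := Real.log_pos (by exact_mod_cast hn)
      have hx : (0 : ℝ) ≤ (n : ℝ) / Real.log n :=
        div_nonneg (Nat.cast_nonneg n) hln.le
      rw [hm n]
      exact le_of_lt (Nat.ceil_lt_add_one hx)
    refine ⟨?_, fun n _ => hMIeq n, ?_⟩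
    · -- MI n / n → 0
      have hub : ∀ᶠ n : ℕ in Filter.atTop,
          MI n / n ≤ Real.log 2 / Real.log n + Real.log 2 / n := by
        filter_upwards [hmle, Filter.eventually_ge_atTop 2] with n h1 hn
        have hn0 : (0 : ℝ) < n := by positivity
        have hln : (0 : ℝ) < Real.log n :=
          Real.log_pos (by exact_mod_cast hn)
        rw [hMIeq n]
        have step : (m n : ℝ) * Real.log 2 / n
            ≤ ((n : ℝ) / Real.log n + 1) * Real.log 2 / n := by
          gcongr
        refine step.trans (le_of_eq ?_)
        field_simp
      have hlb : ∀ᶠ n : ℕ in Filter.atTop, (0 : ℝ) ≤ MI n / n := by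
        filter_upwards with n
        rw [hMIeq n]
        positivity
      have ht : Filter.Tendsto
          (fun n : ℕ => Real.log 2 / Real.log n + Real.log 2 / n)
          Filter.atTop (nhds 0) := by
        have t1 : Filter.Tendsto (fun n : ℕ => Real.log 2 / Real.log n)
            Filter.atTop (nhds 0) :=
          Filter.Tendsto.div_atTop tendsto_const_nhds
            (Real.tendsto_log_atTop.comp tendsto_natCast_atTop_atTop)
        have t2 : Filter.Tendsto (fun n : ℕ => Real.log 2 / (n : ℝ))
            Filter.atTop (nhds 0) :=
          Filter.Tendsto.div_atTop tendsto_const_nhds tendsto_natCast_atTop_atTop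
        simpa using t1.add t2
      exact tendsto_of_tendsto_of_tendsto_of_le_of_le' tendsto_const_nhds ht hlb hub
    · -- MI → ∞
      have hge : ∀ n : ℕ, (n : ℝ) / Real.log n ≤ (m n : ℝ) := by
        intro n
        rw [hm n]
        exact Nat.le_ceil _
      have hmt : Filter.Tendsto (fun n : ℕ => (m n : ℝ)) Filter.atTop Filter.atTop :=
        Filter.tendsto_atTop_mono hge aux_divlog_atTop
      exact (hmt.atTop_mul_const hlog2).congr fun n => (hMIeq n).symm
end
end
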